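/- For every point c ∈ ℂ^k there exists a point r ∈ ℝ^k such that for every affine-linear function f(x) = a_0 + a_1 x_1 + ... + a_k x_k with rational coefficients a_0, ..., a_k, one has f(c) = 0 if and only if f(r) = 0. -/
import Mathlib


/-- Every `c ∈ ℂ^k` can be replaced by an `r ∈ ℝ^k` satisfying exactly
the same affine-linear relations with rational coefficients. -/
theorem stmt15 (k : ℕ) (hk : 1 ≤ k) (c : Fin k → ℂ) :
    ∃ r : Fin k → ℝ, ∀ (a₀ : ℚ) (a : Fin k → ℚ),
      ((a₀ : ℂ) + ∑ i, (a i : ℂ) * c i = 0) ↔ ((a₀ : ℝ) + ∑ i, (a i : ℝ) * r i = 0) := by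
  classical
  set A : ℚ → (Fin k → ℚ) → ℝ := fun a₀ a => (a₀ : ℝ) + ∑ i, (a i : ℝ) * (c i).re with hA
  set B : (Fin k → ℚ) → ℝ := fun a => ∑ i, (a i : ℝ) * (c i).im with hB
  obtain ⟨t, ht⟩ : ∃ t : ℝ, ∀ (a₀ : ℚ) (a : Fin k → ℚ), B a ≠ 0 → t ≠ -(A a₀ a) / B a := by
    have hc : (Set.range fun p : ℚ × (Fin k → ℚ) => -(A p.1 p.2) / B p.2).Countable :=
      Set.countable_range _
    have hne : (Set.range fun p : ℚ × (Fin k → ℚ) => -(A p.1 p.2) / B p.2) ≠ Set.univ := by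
      intro h
      exact Set.not_countable_univ (h ▸ hc)
    obtain ⟨t, ht⟩ := (Set.ne_univ_iff_exists_notMem _).mp hne
    exact ⟨t, fun a₀ a _ h => ht ⟨(a₀, a), h.symm⟩⟩
  refine ⟨fun i => (c i).re + t * (c i).im, fun a₀ a => ?_⟩
  have hre : ((a₀ : ℂ) + ∑ i, (a i : ℂ) * c i).re = A a₀ a := by
    simp [hA, Complex.mul_re]
  have him : ((a₀ : ℂ) + ∑ i, (a i : ℂ) * c i).im = B a := by
    simp [hB, Complex.mul_im]
  have hr : (a₀ : ℝ) + ∑ i, (a i : ℝ) * ((c i).re + t * (c i).im) = A a₀ a + t * B a := by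
    simp only [hA, hB, mul_add, Finset.sum_add_distrib, Finset.mul_sum, mul_left_comm,
      ← add_assoc]
  rw [Complex.ext_iff, hre, him, hr, Complex.zero_re, Complex.zero_im]
  constructor
  · rintro ⟨h1, h2⟩
    rw [h1, h2]; ring
  · intro h
    by_cases hb : B a = 0
    · constructor
      · rw [hb] at h; linarith
      · exact hb
    · exfalso
      apply ht a₀ a hb
      field_simp
      linarith
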